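/- Let X be uniform Bernoulli(1/2), Y its erasure with erasure probability p ∈ (0,1), and (W₁,W₂) random variables with (W₁,W₂)−X−Y a Markov chain. Suppose there exist functions f₁, f₂ with X̂₁ = f₁(W₁), X̂₂ = f₂(W₁,W₂,Y), P(X≠X̂₁) ≤ D₁ ≤ 1/2, and P(X≠X̂₂) ≤ D₂ ≤ p/2. Then I(X;W₁) + I(X;W₂|Y,W₁) ≥ p(1 − h(D₂/p)) + (1−p)(1 − h(D₁)). -/

import Mathlib

open Finset Real
open scoped Classical

noncomputable section

/-- Probability of an event under a finite probability mass function. -/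
def pr {Ω : Type} [Fintype Ω] (P : Ω → ℝ) (A : Ω → Prop) : ℝ :=
  ∑ ω, if A ω then P ω else 0

/-- `P` is a probability mass function on the finite type `Ω`. -/
def IsPMF {Ω : Type} [Fintype Ω] (P : Ω → ℝ) : Prop :=
  (∀ ω, 0 ≤ P ω) ∧ ∑ ω, P ω = 1

/-- `-t log₂ t` (with the convention `0 log 0 = 0`). -/
def nlog (t : ℝ) : ℝ := - (t * Real.logb 2 t)

/-- Shannon entropy (base 2) of a random variable `X` on `(Ω, P)`. -/
def ent {Ω α : Type} [Fintype Ω] [Fintype α] (P : Ω → ℝ) (X : Ω → α) : ℝ :=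
  ∑ x, nlog (pr P (fun ω => X ω = x))

/-- Conditional Shannon entropy `H(X|Y) = H(X,Y) - H(Y)`. -/
def condEnt {Ω α β : Type} [Fintype Ω] [Fintype α] [Fintype β]
    (P : Ω → ℝ) (X : Ω → α) (Y : Ω → β) : ℝ :=
  ent P (fun ω => (X ω, Y ω)) - ent P Y

/-- Mutual information `I(X;Y) = H(X) - H(X|Y)`. -/
def mi {Ω α β : Type} [Fintype Ω] [Fintype α] [Fintype β]
    (P : Ω → ℝ) (X : Ω → α) (Y : Ω → β) : ℝ :=
  ent P X - condEnt P X Y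

/-- Conditional mutual information `I(X;Y|Z) = H(X|Z) - H(X|Y,Z)`. -/
def condMI {Ω α β γ : Type} [Fintype Ω] [Fintype α] [Fintype β] [Fintype γ]
    (P : Ω → ℝ) (X : Ω → α) (Y : Ω → β) (Z : Ω → γ) : ℝ :=
  condEnt P X Z - condEnt P X (fun ω => (Y ω, Z ω))

/-- Binary entropy function. -/
def binEnt (a : ℝ) : ℝ := nlog a + nlog (1 - a)

/-!
The erasure event `Y = none` is independent of `(X, W₁, W₂)` (Markov chain), and off it `Y`
reveals `X`; hence `H(X | Y, W) = p · H(X | W)` both for `W = W₁` and for `W = (W₁, W₂)`, so the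
left-hand side equals `1 - (1 - p) H(X | W₁) - p H(X | W₁, W₂)`. Fano's inequality for binary `X`
gives `H(X | W₁) ≤ h(D₁)`. On the erasure event the second decoder is a function
`g = f₂ · · none` of `(W₁, W₂)` alone, so independence gives `p · P(X ≠ g(W₁, W₂)) ≤ D₂`, and Fano
again gives `H(X | W₁, W₂) ≤ h(D₂ / p)`.
-/

section Probability
variable {Ω : Type} [Fintype Ω] {P : Ω → ℝ}

lemma pr_congr {A B : Ω → Prop} (h : ∀ ω, A ω ↔ B ω) : pr P A = pr P B := by
  simp only [pr, h]

lemma pr_nonneg (hP : IsPMF P) (A : Ω → Prop) : 0 ≤ pr P A :=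
  Finset.sum_nonneg fun ω _ => by split_ifs <;> simp [hP.1 ω]

lemma pr_mono (hP : IsPMF P) {A B : Ω → Prop} (h : ∀ ω, A ω → B ω) : pr P A ≤ pr P B :=
  Finset.sum_le_sum fun ω _ => by
    by_cases hA : A ω
    · simp [hA, h ω hA]
    · simp only [hA, if_false]; split_ifs <;> simp [hP.1 ω]

lemma pr_eq_zero_of_forall_not {A : Ω → Prop} (h : ∀ ω, ¬ A ω) : pr P A = 0 :=
  Finset.sum_eq_zero fun ω _ => by simp [h ω]

lemma pr_and_comp {β : Type} [Fintype β] (A : Ω → Prop) (Z : Ω → β) (B : β → Prop) :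
    pr P (fun ω => A ω ∧ B (Z ω)) = ∑ z, if B z then pr P (fun ω => A ω ∧ Z ω = z) else 0 := by
  have h : ∀ z, (if B z then pr P (fun ω => A ω ∧ Z ω = z) else 0)
      = ∑ ω, if Z ω = z then (if A ω ∧ B (Z ω) then P ω else 0) else 0 := by
    intro z
    split_ifs with hz
    · exact Fintype.sum_congr _ _ fun ω => by by_cases hω : Z ω = z <;> simp [hω, hz]
    · exact (Finset.sum_eq_zero fun ω _ => by by_cases hω : Z ω = z <;> simp [hω, hz]).symm
  rw [Fintype.sum_congr _ _ h, Finset.sum_comm]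
  simp only [pr, Finset.sum_ite_eq, Finset.mem_univ, if_true]
  -- the two sides differ only in their `Decidable` instances
  convert rfl

lemma pr_eq_sum_pr_and {β : Type} [Fintype β] (A : Ω → Prop) (Z : Ω → β) :
    pr P A = ∑ z, pr P (fun ω => A ω ∧ Z ω = z) := by
  simpa using pr_and_comp (P := P) A Z (fun _ => True)

lemma pr_total (hP : IsPMF P) {β : Type} [Fintype β] (Z : Ω → β) :
    ∑ z, pr P (fun ω => Z ω = z) = 1 := by
  simpa [pr, hP.2] using (pr_eq_sum_pr_and (P := P) (fun _ => True) Z).symm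

lemma pr_and_comp_eq_mul {β : Type} [Fintype β] {A : Ω → Prop} {Z : Ω → β} {c : ℝ}
    (h : ∀ z, pr P (fun ω => A ω ∧ Z ω = z) = c * pr P (fun ω => Z ω = z)) (B : β → Prop) :
    pr P (fun ω => A ω ∧ B (Z ω)) = c * pr P (fun ω => B (Z ω)) := by
  have hB := pr_and_comp (P := P) (fun _ => True) Z B
  simp only [true_and] at hB
  rw [hB, pr_and_comp, Finset.mul_sum]
  simp only [h, mul_ite, mul_zero]

end Probability

lemma nlog_zero : nlog 0 = 0 := by simp [nlog]

lemma nlog_mul {a b : ℝ} (ha : 0 ≤ a) (hb : 0 ≤ b) :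
    nlog (a * b) = a * nlog b + b * nlog a := by
  rcases ha.eq_or_lt with rfl | ha
  · simp [nlog]
  rcases hb.eq_or_lt with rfl | hb
  · simp [nlog]
  simp only [nlog, logb, log_mul ha.ne' hb.ne']
  ring

section Entropy
variable {Ω : Type} [Fintype Ω] {P : Ω → ℝ}

def entOn {β : Type} [Fintype β] (P : Ω → ℝ) (A : Ω → Prop) (T : Ω → β) : ℝ :=
  ∑ t, nlog (pr P (fun ω => A ω ∧ T ω = t))

lemma entOn_true {β : Type} [Fintype β] (T : Ω → β) : entOn P (fun _ => True) T = ent P T := by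
  simp only [entOn, ent, true_and]

lemma ent_eq_entOn_add_entOn_not {β : Type} [Fintype β] {A : Ω → Prop} {T : Ω → β}
    (a : β → Prop) (hA : ∀ ω, A ω ↔ a (T ω)) :
    ent P T = entOn P A T + entOn P (fun ω => ¬ A ω) T := by
  rw [entOn, entOn, ← Finset.sum_add_distrib]
  refine Fintype.sum_congr _ _ fun t => ?_
  have hA_iff : ∀ ω, T ω = t → (A ω ↔ a t) := fun ω h => h ▸ hA ω
  by_cases ht : a t
  · rw [pr_congr (B := fun ω => A ω ∧ T ω = t)
        fun ω => ⟨fun h => ⟨(hA_iff ω h).2 ht, h⟩, And.right⟩,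
      pr_eq_zero_of_forall_not (A := fun ω => ¬ A ω ∧ T ω = t) fun ω h => h.1 ((hA_iff ω h.2).2 ht),
      nlog_zero, add_zero]
  · rw [pr_congr (B := fun ω => ¬ A ω ∧ T ω = t)
        fun ω => ⟨fun h => ⟨fun hω => ht ((hA_iff ω h).1 hω), h⟩, And.right⟩,
      pr_eq_zero_of_forall_not (A := fun ω => A ω ∧ T ω = t) fun ω h => ht ((hA_iff ω h.2).1 h.1),
      nlog_zero, zero_add]

lemma entOn_eq_of_injective {β β' : Type} [Fintype β] [Fintype β'] {A : Ω → Prop}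
    {T : Ω → β} {T' : Ω → β'} {g : β → β'} (hg : Function.Injective g)
    (h : ∀ ω, A ω → T' ω = g (T ω)) : entOn P A T' = entOn P A T := by
  refine (Fintype.sum_of_injective g hg _ _ (fun b hb => ?_) fun t => ?_).symm
  · rw [pr_eq_zero_of_forall_not fun ω (hω : A ω ∧ T' ω = b) => hb ⟨T ω, (h ω hω.1 ▸ hω.2)⟩,
      nlog_zero]
  · exact congrArg nlog <| pr_congr fun ω =>
      ⟨fun ⟨hA, hT⟩ => ⟨hA, by rw [h ω hA, hT]⟩, fun ⟨hA, hT⟩ => ⟨hA, hg (h ω hA ▸ hT)⟩⟩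

lemma ent_eq_of_injective {β β' : Type} [Fintype β] [Fintype β'] {T : Ω → β} {T' : Ω → β'}
    {g : β → β'} (hg : Function.Injective g) (h : ∀ ω, T' ω = g (T ω)) :
    ent P T' = ent P T := by
  rw [← entOn_true, ← entOn_true]
  exact entOn_eq_of_injective hg fun ω _ => h ω

lemma condEnt_eq_of_injective {α β β' : Type} [Fintype α] [Fintype β] [Fintype β']
    (X : Ω → α) {T : Ω → β} {T' : Ω → β'} {g : β → β'} (hg : Function.Injective g)
    (h : ∀ ω, T' ω = g (T ω)) : condEnt P X T' = condEnt P X T := by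
  rw [condEnt, condEnt, ent_eq_of_injective hg h,
    ent_eq_of_injective (T := fun ω => (X ω, T ω)) (Function.injective_id.prodMap hg)
      fun ω => by simp [h ω]]

lemma entOn_of_indep (hP : IsPMF P) {β : Type} [Fintype β] {A : Ω → Prop} {T : Ω → β}
    {c : ℝ} (hc : 0 ≤ c) (h : ∀ t, pr P (fun ω => A ω ∧ T ω = t) = c * pr P (fun ω => T ω = t)) :
    entOn P A T = c * ent P T + nlog c := by
  simp only [entOn, ent, h, nlog_mul hc (pr_nonneg hP _), Finset.sum_add_distrib,
    ← Finset.mul_sum, ← Finset.sum_mul, pr_total hP, one_mul]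

lemma ent_of_uniform_bool {X : Ω → Bool} (hX : ∀ b, pr P (fun ω => X ω = b) = 1 / 2) :
    ent P X = 1 := by
  simp [ent, hX, nlog]

end Entropy

lemma binEnt_eq_binEntropy (a : ℝ) : binEnt a = binEntropy a / log 2 := by
  simp only [binEnt, nlog, logb, binEntropy_eq_negMulLog_add_negMulLog_one_sub, negMulLog]
  ring

lemma binEnt_monotoneOn : MonotoneOn binEnt (Set.Icc 0 2⁻¹) := fun a ha b hb hab => by
  simp only [binEnt_eq_binEntropy]
  exact div_le_div_of_nonneg_right (binEntropy_strictMonoOn.monotoneOn ha hb hab)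
    (log_nonneg one_le_two)

lemma concaveOn_binEnt : ConcaveOn ℝ (Set.Icc 0 1) binEnt := by
  have h : binEnt = fun a => (log 2)⁻¹ • binEntropy a :=
    funext fun a => by rw [binEnt_eq_binEntropy, smul_eq_mul, div_eq_inv_mul]
  rw [h]
  exact strictConcave_binEntropy.concaveOn.smul (inv_nonneg.2 (log_nonneg one_le_two))

lemma nlog_add_nlog_sub_nlog_add {a b : ℝ} (ha : 0 ≤ a) (hb : 0 ≤ b) :
    nlog a + nlog b - nlog (a + b) = (a + b) * binEnt (a / (a + b)) := by
  rcases (add_nonneg ha hb).eq_or_lt with hab | hab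
  · obtain ⟨rfl, rfl⟩ : a = 0 ∧ b = 0 := ⟨by linarith, by linarith⟩
    simp [nlog_zero]
  have hsplit : ∀ t, 0 ≤ t → nlog t = (a + b) * nlog (t / (a + b)) + t / (a + b) * nlog (a + b) :=
    fun t ht => by rw [← nlog_mul hab.le (div_nonneg ht hab.le), mul_div_cancel₀ _ hab.ne']
  have hsum : a / (a + b) + b / (a + b) = 1 := by rw [← add_div, div_self hab.ne']
  rw [binEnt, show 1 - a / (a + b) = b / (a + b) by linarith]
  linear_combination hsplit a ha + hsplit b hb + nlog (a + b) * hsum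

section Fano
variable {Ω α : Type} [Fintype Ω] [Fintype α] {P : Ω → ℝ}

lemma condEnt_bool_eq_sum (hP : IsPMF P) (Z : Ω → Bool) (W : Ω → α) :
    condEnt P Z W = ∑ w, pr P (fun ω => W ω = w)
      * binEnt (pr P (fun ω => Z ω = true ∧ W ω = w) / pr P (fun ω => W ω = w)) := by
  have hW : ∀ w, pr P (fun ω => W ω = w)
      = pr P (fun ω => Z ω = true ∧ W ω = w) + pr P (fun ω => Z ω = false ∧ W ω = w) := by
    intro w
    rw [pr_eq_sum_pr_and _ Z, Fintype.sum_bool]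
    congr 1 <;> exact pr_congr fun ω => and_comm
  have hZW : ent P (fun ω => (Z ω, W ω)) = ∑ w, (nlog (pr P (fun ω => Z ω = true ∧ W ω = w))
      + nlog (pr P (fun ω => Z ω = false ∧ W ω = w))) := by
    rw [ent, Fintype.sum_prod_type, Fintype.sum_bool, ← Finset.sum_add_distrib]
    simp only [Prod.mk.injEq]
  rw [condEnt, hZW, ent, ← Finset.sum_sub_distrib]
  refine Fintype.sum_congr _ _ fun w => ?_
  rw [hW w, nlog_add_nlog_sub_nlog_add (pr_nonneg hP _) (pr_nonneg hP _)]

lemma condEnt_bool_le_binEnt (hP : IsPMF P) (Z : Ω → Bool) (W : Ω → α) :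
    condEnt P Z W ≤ binEnt (pr P (fun ω => Z ω = true)) := by
  rw [condEnt_bool_eq_sum hP]
  set s := fun w => pr P (fun ω => W ω = w)
  set q := fun w => pr P (fun ω => Z ω = true ∧ W ω = w)
  have hqs : ∀ w, q w ≤ s w := fun w => pr_mono hP fun ω h => h.2
  have hsq : ∀ w, s w * (q w / s w) = q w := by
    intro w
    rcases (pr_nonneg hP (fun ω => W ω = w)).eq_or_lt with hs | hs
    · have hq : q w = 0 := le_antisymm (hs ▸ hqs w) (pr_nonneg hP _)
      simp [hq]
    · exact mul_div_cancel₀ _ hs.ne'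
  calc ∑ w, s w * binEnt (q w / s w) ≤ binEnt (∑ w, s w * (q w / s w)) :=
        concaveOn_binEnt.le_map_sum (fun w _ => pr_nonneg hP _) (pr_total hP W)
          fun w _ => ⟨div_nonneg (pr_nonneg hP _) (pr_nonneg hP _),
            div_le_one_of_le₀ (hqs w) (pr_nonneg hP _)⟩
    _ = binEnt (pr P (fun ω => Z ω = true)) := by simp only [hsq, q, ← pr_eq_sum_pr_and]

theorem condEnt_le_binEnt_of_error_le (hP : IsPMF P) {X : Ω → Bool} {W : Ω → α}
    {f : α → Bool} {D : ℝ} (hD : pr P (fun ω => X ω ≠ f (W ω)) ≤ D) (hD2 : D ≤ 1 / 2) :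
    condEnt P X W ≤ binEnt D := by
  have hinj : Function.Injective fun u : Bool × α => (u.1 != f u.2, u.2) := by
    rintro ⟨x, w⟩ ⟨x', w'⟩ h
    simp only [Prod.mk.injEq] at h
    obtain ⟨h, rfl⟩ := h
    simpa using h
  have hrel : condEnt P X W = condEnt P (fun ω => X ω != f (W ω)) W := by
    rw [condEnt, condEnt, ent_eq_of_injective (T := fun ω => (X ω, W ω)) hinj fun ω => rfl]
  have herr : pr P (fun ω => (X ω != f (W ω)) = true) = pr P (fun ω => X ω ≠ f (W ω)) :=
    pr_congr fun ω => bne_iff_ne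
  rw [hrel]
  refine (condEnt_bool_le_binEnt hP _ W).trans ?_
  rw [herr]
  exact binEnt_monotoneOn ⟨pr_nonneg hP _, by linarith⟩ ⟨(pr_nonneg hP _).trans hD, by linarith⟩ hD

end Fano

section Erasure
variable {Ω α β : Type} [Fintype Ω] [Fintype α] [Fintype β] {P : Ω → ℝ}

theorem condEnt_erasure (hP : IsPMF P) {X : Ω → α} {Y : Ω → Option α} {W : Ω → β} {p : ℝ}
    (hY : ∀ ω, Y ω = some (X ω) ∨ Y ω = none) (hp : 0 ≤ p)
    (hE : ∀ z, pr P (fun ω => Y ω = none ∧ (X ω, W ω) = z) = p * pr P (fun ω => (X ω, W ω) = z)) :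
    condEnt P X (fun ω => (Y ω, W ω)) = p * condEnt P X W := by
  have hEW : ∀ w, pr P (fun ω => Y ω = none ∧ W ω = w) = p * pr P (fun ω => W ω = w) :=
    fun w => pr_and_comp_eq_mul hE (fun u => u.2 = w)
  have hXYW : ent P (fun ω => (X ω, (Y ω, W ω)))
      = entOn P (fun ω => Y ω = none) (fun ω => (X ω, W ω))
        + entOn P (fun ω => ¬ Y ω = none) (fun ω => (X ω, W ω)) := by
    rw [ent_eq_entOn_add_entOn_not (A := fun ω => Y ω = none) (fun t => t.2.1 = none)
      fun ω => Iff.rfl]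
    congr 1
    · exact entOn_eq_of_injective (g := fun u => (u.1, (none, u.2)))
        (fun _ _ h => by simp_all [Prod.ext_iff]) fun ω hω => Prod.ext rfl (Prod.ext hω rfl)
    · exact entOn_eq_of_injective (g := fun u => (u.1, (some u.1, u.2)))
        (fun _ _ h => by simp_all [Prod.ext_iff])
        fun ω hω => Prod.ext rfl (Prod.ext ((hY ω).resolve_right hω) rfl)
  have hYW : ent P (fun ω => (Y ω, W ω))
      = entOn P (fun ω => Y ω = none) W
        + entOn P (fun ω => ¬ Y ω = none) (fun ω => (X ω, W ω)) := by
    rw [ent_eq_entOn_add_entOn_not (A := fun ω => Y ω = none) (fun t => t.1 = none)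
      fun ω => Iff.rfl]
    congr 1
    · exact entOn_eq_of_injective (g := fun w => (none, w))
        (fun _ _ h => by simp_all [Prod.ext_iff]) fun ω hω => Prod.ext hω rfl
    · exact entOn_eq_of_injective (g := fun u => (some u.1, u.2))
        (fun _ _ h => by simp_all [Prod.ext_iff])
        fun ω hω => Prod.ext ((hY ω).resolve_right hω) rfl
  rw [condEnt, condEnt, hXYW, hYW, entOn_of_indep hP hp hE, entOn_of_indep hP hp hEW]
  ring

theorem mi_add_condMI_of_erasure {β' : Type} [Fintype β'] (hP : IsPMF P) {X : Ω → α}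
    {Y : Ω → Option α} {W₁ : Ω → β} {W₂ : Ω → β'} {p : ℝ}
    (hY : ∀ ω, Y ω = some (X ω) ∨ Y ω = none) (hp : 0 ≤ p)
    (hE : ∀ z, pr P (fun ω => Y ω = none ∧ (X ω, (W₁ ω, W₂ ω)) = z)
      = p * pr P (fun ω => (X ω, (W₁ ω, W₂ ω)) = z)) :
    mi P X W₁ + condMI P X W₂ (fun ω => (Y ω, W₁ ω))
      = ent P X - (1 - p) * condEnt P X W₁ - p * condEnt P X (fun ω => (W₁ ω, W₂ ω)) := by
  have h₁ : condEnt P X (fun ω => (Y ω, W₁ ω)) = p * condEnt P X W₁ :=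
    condEnt_erasure hP hY hp fun z => pr_and_comp_eq_mul hE (fun u => (u.1, u.2.1) = z)
  have h₂ : condEnt P X (fun ω => (W₂ ω, (Y ω, W₁ ω)))
      = p * condEnt P X (fun ω => (W₁ ω, W₂ ω)) := by
    rw [condEnt_eq_of_injective X (T := fun ω => (Y ω, (W₁ ω, W₂ ω)))
      (g := fun u => (u.2.2, (u.1, u.2.1))) (fun _ _ h => by simp_all [Prod.ext_iff]) fun ω => rfl]
    exact condEnt_erasure hP hY hp hE
  rw [mi, condMI, h₁, h₂]
  ring

end Erasure

theorem stmt8_general {Ω γ δ : Type} [Fintype Ω] [Fintype γ] [Fintype δ]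
    (P : Ω → ℝ) (hP : IsPMF P)
    (X : Ω → Bool) (Y : Ω → Option Bool) (W₁ : Ω → γ) (W₂ : Ω → δ)
    (f₁ : γ → Bool) (f₂ : γ → δ → Option Bool → Bool)
    (p D₁ D₂ : ℝ) (hp : 0 < p) (hp1 : p < 1)
    (hX : ∀ b, pr P (fun ω => X ω = b) = 1/2)
    (hstruct : ∀ ω, Y ω = some (X ω) ∨ Y ω = none)
    (hind : ∀ b, pr P (fun ω => Y ω = none ∧ X ω = b) = p * pr P (fun ω => X ω = b))
    (hMarkov : ∀ (x : Bool) (y : Option Bool) (w1 : γ) (w2 : δ),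
      pr P (fun ω => X ω = x ∧ Y ω = y ∧ W₁ ω = w1 ∧ W₂ ω = w2) * pr P (fun ω => X ω = x)
        = pr P (fun ω => X ω = x ∧ Y ω = y)
          * pr P (fun ω => X ω = x ∧ W₁ ω = w1 ∧ W₂ ω = w2))
    (hD1half : D₁ ≤ 1/2)
    (hD2half : D₂ ≤ p/2)
    (hdist1 : pr P (fun ω => X ω ≠ f₁ (W₁ ω)) ≤ D₁)
    (hdist2 : pr P (fun ω => X ω ≠ f₂ (W₁ ω) (W₂ ω) (Y ω)) ≤ D₂) :
    mi P X W₁ + condMI P X W₂ (fun ω => (Y ω, W₁ ω))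
      ≥ p * (1 - binEnt (D₂ / p)) + (1 - p) * (1 - binEnt D₁) := by
  have hE : ∀ z, pr P (fun ω => Y ω = none ∧ (X ω, (W₁ ω, W₂ ω)) = z)
      = p * pr P (fun ω => (X ω, (W₁ ω, W₂ ω)) = z) := by
    rintro ⟨x, w₁, w₂⟩
    have hm := hMarkov x none w₁ w₂
    rw [hX, pr_congr (B := fun ω => Y ω = none ∧ X ω = x) fun ω => and_comm, hind, hX] at hm
    simp only [Prod.mk.injEq]
    rw [pr_congr (B := fun ω => X ω = x ∧ Y ω = none ∧ W₁ ω = w₁ ∧ W₂ ω = w₂) fun ω => by tauto]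
    linarith
  set g : γ × δ → Bool := fun v => f₂ v.1 v.2 none
  have herr : pr P (fun ω => X ω ≠ g (W₁ ω, W₂ ω)) ≤ D₂ / p := by
    rw [le_div_iff₀ hp, mul_comm, ← pr_and_comp_eq_mul hE (fun u => u.1 ≠ g u.2)]
    refine (pr_mono hP fun ω h => ?_).trans hdist2
    rw [h.1]
    exact h.2
  have b₁ := condEnt_le_binEnt_of_error_le hP hdist1 hD1half
  have b₂ := condEnt_le_binEnt_of_error_le hP herr (by rw [div_le_iff₀ hp]; linarith)
  rw [ge_iff_le, mi_add_condMI_of_erasure hP hstruct hp.le hE, ent_of_uniform_bool hX]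
  linarith [mul_le_mul_of_nonneg_left b₁ (sub_nonneg.2 hp1.le),
    mul_le_mul_of_nonneg_left b₂ hp.le]

/-- Converse bound for regime L₄: for `X` uniform, `Y` its erasure with probability
`p ∈ (0,1)`, `(W₁,W₂) - X - Y` Markov, `X̂₁ = f₁(W₁)`, `X̂₂ = f₂(W₁,W₂,Y)` with
`P(X≠X̂₁) ≤ D₁ ≤ 1/2` and `P(X≠X̂₂) ≤ D₂ ≤ p/2`, we have
`I(X;W₁) + I(X;W₂|Y,W₁) ≥ p(1 - h(D₂/p)) + (1-p)(1 - h(D₁))`. -/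
theorem stmt8 {Ω γ δ : Type} [Fintype Ω] [Fintype γ] [Fintype δ]
    (P : Ω → ℝ) (hP : IsPMF P)
    (X : Ω → Bool) (Y : Ω → Option Bool) (W₁ : Ω → γ) (W₂ : Ω → δ)
    (f₁ : γ → Bool) (f₂ : γ → δ → Option Bool → Bool)
    (p D₁ D₂ : ℝ) (hp : 0 < p) (hp1 : p < 1)
    (hX : ∀ b, pr P (fun ω => X ω = b) = 1/2)
    (hstruct : ∀ ω, Y ω = some (X ω) ∨ Y ω = none)
    (hind : ∀ b, pr P (fun ω => Y ω = none ∧ X ω = b) = p * pr P (fun ω => X ω = b))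
    (hMarkov : ∀ (x : Bool) (y : Option Bool) (w1 : γ) (w2 : δ),
      pr P (fun ω => X ω = x ∧ Y ω = y ∧ W₁ ω = w1 ∧ W₂ ω = w2) * pr P (fun ω => X ω = x)
        = pr P (fun ω => X ω = x ∧ Y ω = y)
          * pr P (fun ω => X ω = x ∧ W₁ ω = w1 ∧ W₂ ω = w2))
    (hD10 : 0 ≤ D₁) (hD1half : D₁ ≤ 1/2)
    (hD20 : 0 ≤ D₂) (hD2half : D₂ ≤ p/2)
    (hdist1 : pr P (fun ω => X ω ≠ f₁ (W₁ ω)) ≤ D₁)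
    (hdist2 : pr P (fun ω => X ω ≠ f₂ (W₁ ω) (W₂ ω) (Y ω)) ≤ D₂) :
    mi P X W₁ + condMI P X W₂ (fun ω => (Y ω, W₁ ω))
      ≥ p * (1 - binEnt (D₂ / p)) + (1 - p) * (1 - binEnt D₁) :=
  stmt8_general P hP X Y W₁ W₂ f₁ f₂ p D₁ D₂ hp hp1 hX hstruct hind hMarkov hD1half hD2half hdist1
    hdist2
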